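/- Let G be a finite simple graph without 3-cycles such that any two distinct cycles of length 4, 5, or 6 have at most two common edges, and any two distinct 4-cycles have at most one common edge. Then there do not exist vertices u, v, x, y, b, a', b' of G such that u,x,y,v is a path of length three, u,x,b,v is a path of length three with b ≠ y, and u,a',b',v is a path of length three with a' ∉ {x,y} and b' ∉ {x,y}. -/
import Mathlib

open SimpleGraph Finset

set_option maxHeartbeats 1000000

/-- A subgraph `H` of `G` is a `k`-cycle (a cycle on `k` vertices, viewed as a subgraph)
if it is connected, has exactly `k` vertices, and every one of its vertices has exactly
two neighbours in `H`. -/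
def SimpleGraph.Subgraph.IsCycleSubgraph {V : Type*} {G : SimpleGraph V}
    (H : G.Subgraph) (k : ℕ) : Prop :=
  H.Connected ∧ H.verts.ncard = k ∧ ∀ v ∈ H.verts, (H.neighborSet v).ncard = 2

lemma exists_cycle3 {V : Type*} {G : SimpleGraph V} {v0 v1 v2 : V}
    (hd : ([v0,v1,v2] : List V).Nodup)
    (h01 : G.Adj v0 v1) (h12 : G.Adj v1 v2) (h20 : G.Adj v2 v0) :
    ∃ C : G.Subgraph, C.IsCycleSubgraph 3 ∧ C.verts = {v0,v1,v2} ∧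
      ∀ a b, C.Adj a b ↔ (s(a,b) = s(v0,v1) ∨ s(a,b) = s(v1,v2) ∨ s(a,b) = s(v2,v0)) := by
  simp only [List.nodup_cons, List.mem_cons, List.not_mem_nil, or_false, List.nodup_nil,
    and_true, not_or] at hd
  obtain ⟨⟨d01,d02⟩,d12,-⟩ := hd
  let w : G.Walk v0 v0 := .cons h01 (.cons h12 (.cons h20 (Walk.nil)))
  have hts : w.toSubgraph = G.subgraphOfAdj h01 ⊔ (G.subgraphOfAdj h12 ⊔ (G.subgraphOfAdj h20 ⊔ (G.singletonSubgraph v0))) := rfl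
  have hadj : ∀ a b, w.toSubgraph.Adj a b ↔ (s(a,b) = s(v0,v1) ∨ s(a,b) = s(v1,v2) ∨ s(a,b) = s(v2,v0)) := by
    intro a b
    rw [hts]
    simp only [Subgraph.sup_adj, subgraphOfAdj_adj, singletonSubgraph_adj, Pi.bot_apply,
      Prop.bot_eq_false, or_false]
    try tauto
  have hverts : w.toSubgraph.verts = {v0,v1,v2} := by
    rw [hts]
    ext z
    simp only [Subgraph.verts_sup, subgraphOfAdj_verts, singletonSubgraph_verts,
      Set.mem_union, Set.mem_insert_iff, Set.mem_singleton_iff]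
    tauto
  have n0 : w.toSubgraph.neighborSet v0 = {v1, v2} := by
    ext z
    rw [Subgraph.mem_neighborSet, hadj]
    simp only [Sym2.eq, Sym2.rel_iff', Prod.mk.injEq, Prod.swap_prod_mk,
      Set.mem_insert_iff, Set.mem_singleton_iff]
    simp only [d01, d02, d12, Ne.symm d01, Ne.symm d02, Ne.symm d12, false_and, and_false, or_false, false_or, true_and, and_true]
    try tauto
  have c0 : (w.toSubgraph.neighborSet v0).ncard = 2 := by rw [n0, Set.ncard_pair d12]
  have n1 : w.toSubgraph.neighborSet v1 = {v2, v0} := by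
    ext z
    rw [Subgraph.mem_neighborSet, hadj]
    simp only [Sym2.eq, Sym2.rel_iff', Prod.mk.injEq, Prod.swap_prod_mk,
      Set.mem_insert_iff, Set.mem_singleton_iff]
    simp only [d01, d02, d12, Ne.symm d01, Ne.symm d02, Ne.symm d12, false_and, and_false, or_false, false_or, true_and, and_true]
    try tauto
  have c1 : (w.toSubgraph.neighborSet v1).ncard = 2 := by rw [n1, Set.ncard_pair (Ne.symm d02)]
  have n2 : w.toSubgraph.neighborSet v2 = {v0, v1} := by
    ext z
    rw [Subgraph.mem_neighborSet, hadj]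
    simp only [Sym2.eq, Sym2.rel_iff', Prod.mk.injEq, Prod.swap_prod_mk,
      Set.mem_insert_iff, Set.mem_singleton_iff]
    simp only [d01, d02, d12, Ne.symm d01, Ne.symm d02, Ne.symm d12, false_and, and_false, or_false, false_or, true_and, and_true]
    try tauto
  have c2 : (w.toSubgraph.neighborSet v2).ncard = 2 := by rw [n2, Set.ncard_pair d01]
  refine ⟨w.toSubgraph, ⟨w.toSubgraph_connected, ?_, ?_⟩, hverts, hadj⟩
  · rw [hverts]
    rw [      Set.ncard_insert_of_notMem (by simp [d01,d02]) (Set.toFinite _),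
      Set.ncard_insert_of_notMem (by simp [d12]) (Set.toFinite _),
      Set.ncard_singleton]
  · intro p hp
    rw [hverts] at hp
    simp only [Set.mem_insert_iff, Set.mem_singleton_iff] at hp
    rcases hp with rfl|rfl|rfl <;> assumption

lemma exists_cycle4 {V : Type*} {G : SimpleGraph V} {v0 v1 v2 v3 : V}
    (hd : ([v0,v1,v2,v3] : List V).Nodup)
    (h01 : G.Adj v0 v1) (h12 : G.Adj v1 v2) (h23 : G.Adj v2 v3) (h30 : G.Adj v3 v0) :
    ∃ C : G.Subgraph, C.IsCycleSubgraph 4 ∧ C.verts = {v0,v1,v2,v3} ∧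
      ∀ a b, C.Adj a b ↔ (s(a,b) = s(v0,v1) ∨ s(a,b) = s(v1,v2) ∨ s(a,b) = s(v2,v3) ∨ s(a,b) = s(v3,v0)) := by
  simp only [List.nodup_cons, List.mem_cons, List.not_mem_nil, or_false, List.nodup_nil,
    and_true, not_or] at hd
  obtain ⟨⟨d01,d02,d03⟩,⟨d12,d13⟩,d23,-⟩ := hd
  let w : G.Walk v0 v0 := .cons h01 (.cons h12 (.cons h23 (.cons h30 (Walk.nil))))
  have hts : w.toSubgraph = G.subgraphOfAdj h01 ⊔ (G.subgraphOfAdj h12 ⊔ (G.subgraphOfAdj h23 ⊔ (G.subgraphOfAdj h30 ⊔ (G.singletonSubgraph v0)))) := rfl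
  have hadj : ∀ a b, w.toSubgraph.Adj a b ↔ (s(a,b) = s(v0,v1) ∨ s(a,b) = s(v1,v2) ∨ s(a,b) = s(v2,v3) ∨ s(a,b) = s(v3,v0)) := by
    intro a b
    rw [hts]
    simp only [Subgraph.sup_adj, subgraphOfAdj_adj, singletonSubgraph_adj, Pi.bot_apply,
      Prop.bot_eq_false, or_false]
    try tauto
  have hverts : w.toSubgraph.verts = {v0,v1,v2,v3} := by
    rw [hts]
    ext z
    simp only [Subgraph.verts_sup, subgraphOfAdj_verts, singletonSubgraph_verts,
      Set.mem_union, Set.mem_insert_iff, Set.mem_singleton_iff]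
    tauto
  have n0 : w.toSubgraph.neighborSet v0 = {v1, v3} := by
    ext z
    rw [Subgraph.mem_neighborSet, hadj]
    simp only [Sym2.eq, Sym2.rel_iff', Prod.mk.injEq, Prod.swap_prod_mk,
      Set.mem_insert_iff, Set.mem_singleton_iff]
    simp only [d01, d02, d03, d12, d13, d23, Ne.symm d01, Ne.symm d02, Ne.symm d03, Ne.symm d12, Ne.symm d13, Ne.symm d23, false_and, and_false, or_false, false_or, true_and, and_true]
    try tauto
  have c0 : (w.toSubgraph.neighborSet v0).ncard = 2 := by rw [n0, Set.ncard_pair d13]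
  have n1 : w.toSubgraph.neighborSet v1 = {v2, v0} := by
    ext z
    rw [Subgraph.mem_neighborSet, hadj]
    simp only [Sym2.eq, Sym2.rel_iff', Prod.mk.injEq, Prod.swap_prod_mk,
      Set.mem_insert_iff, Set.mem_singleton_iff]
    simp only [d01, d02, d03, d12, d13, d23, Ne.symm d01, Ne.symm d02, Ne.symm d03, Ne.symm d12, Ne.symm d13, Ne.symm d23, false_and, and_false, or_false, false_or, true_and, and_true]
    try tauto
  have c1 : (w.toSubgraph.neighborSet v1).ncard = 2 := by rw [n1, Set.ncard_pair (Ne.symm d02)]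
  have n2 : w.toSubgraph.neighborSet v2 = {v3, v1} := by
    ext z
    rw [Subgraph.mem_neighborSet, hadj]
    simp only [Sym2.eq, Sym2.rel_iff', Prod.mk.injEq, Prod.swap_prod_mk,
      Set.mem_insert_iff, Set.mem_singleton_iff]
    simp only [d01, d02, d03, d12, d13, d23, Ne.symm d01, Ne.symm d02, Ne.symm d03, Ne.symm d12, Ne.symm d13, Ne.symm d23, false_and, and_false, or_false, false_or, true_and, and_true]
    try tauto
  have c2 : (w.toSubgraph.neighborSet v2).ncard = 2 := by rw [n2, Set.ncard_pair (Ne.symm d13)]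
  have n3 : w.toSubgraph.neighborSet v3 = {v0, v2} := by
    ext z
    rw [Subgraph.mem_neighborSet, hadj]
    simp only [Sym2.eq, Sym2.rel_iff', Prod.mk.injEq, Prod.swap_prod_mk,
      Set.mem_insert_iff, Set.mem_singleton_iff]
    simp only [d01, d02, d03, d12, d13, d23, Ne.symm d01, Ne.symm d02, Ne.symm d03, Ne.symm d12, Ne.symm d13, Ne.symm d23, false_and, and_false, or_false, false_or, true_and, and_true]
    try tauto
  have c3 : (w.toSubgraph.neighborSet v3).ncard = 2 := by rw [n3, Set.ncard_pair d02]
  refine ⟨w.toSubgraph, ⟨w.toSubgraph_connected, ?_, ?_⟩, hverts, hadj⟩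
  · rw [hverts]
    rw [      Set.ncard_insert_of_notMem (by simp [d01,d02,d03]) (Set.toFinite _),
      Set.ncard_insert_of_notMem (by simp [d12,d13]) (Set.toFinite _),
      Set.ncard_insert_of_notMem (by simp [d23]) (Set.toFinite _),
      Set.ncard_singleton]
  · intro p hp
    rw [hverts] at hp
    simp only [Set.mem_insert_iff, Set.mem_singleton_iff] at hp
    rcases hp with rfl|rfl|rfl|rfl <;> assumption

lemma exists_cycle6 {V : Type*} {G : SimpleGraph V} {v0 v1 v2 v3 v4 v5 : V}
    (hd : ([v0,v1,v2,v3,v4,v5] : List V).Nodup)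
    (h01 : G.Adj v0 v1) (h12 : G.Adj v1 v2) (h23 : G.Adj v2 v3) (h34 : G.Adj v3 v4) (h45 : G.Adj v4 v5) (h50 : G.Adj v5 v0) :
    ∃ C : G.Subgraph, C.IsCycleSubgraph 6 ∧ C.verts = {v0,v1,v2,v3,v4,v5} ∧
      ∀ a b, C.Adj a b ↔ (s(a,b) = s(v0,v1) ∨ s(a,b) = s(v1,v2) ∨ s(a,b) = s(v2,v3) ∨ s(a,b) = s(v3,v4) ∨ s(a,b) = s(v4,v5) ∨ s(a,b) = s(v5,v0)) := by
  simp only [List.nodup_cons, List.mem_cons, List.not_mem_nil, or_false, List.nodup_nil,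
    and_true, not_or] at hd
  obtain ⟨⟨d01,d02,d03,d04,d05⟩,⟨d12,d13,d14,d15⟩,⟨d23,d24,d25⟩,⟨d34,d35⟩,d45,-⟩ := hd
  let w : G.Walk v0 v0 := .cons h01 (.cons h12 (.cons h23 (.cons h34 (.cons h45 (.cons h50 (Walk.nil))))))
  have hts : w.toSubgraph = G.subgraphOfAdj h01 ⊔ (G.subgraphOfAdj h12 ⊔ (G.subgraphOfAdj h23 ⊔ (G.subgraphOfAdj h34 ⊔ (G.subgraphOfAdj h45 ⊔ (G.subgraphOfAdj h50 ⊔ (G.singletonSubgraph v0)))))) := rfl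
  have hadj : ∀ a b, w.toSubgraph.Adj a b ↔ (s(a,b) = s(v0,v1) ∨ s(a,b) = s(v1,v2) ∨ s(a,b) = s(v2,v3) ∨ s(a,b) = s(v3,v4) ∨ s(a,b) = s(v4,v5) ∨ s(a,b) = s(v5,v0)) := by
    intro a b
    rw [hts]
    simp only [Subgraph.sup_adj, subgraphOfAdj_adj, singletonSubgraph_adj, Pi.bot_apply,
      Prop.bot_eq_false, or_false]
    try tauto
  have hverts : w.toSubgraph.verts = {v0,v1,v2,v3,v4,v5} := by
    rw [hts]
    ext z
    simp only [Subgraph.verts_sup, subgraphOfAdj_verts, singletonSubgraph_verts,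
      Set.mem_union, Set.mem_insert_iff, Set.mem_singleton_iff]
    tauto
  have n0 : w.toSubgraph.neighborSet v0 = {v1, v5} := by
    ext z
    rw [Subgraph.mem_neighborSet, hadj]
    simp only [Sym2.eq, Sym2.rel_iff', Prod.mk.injEq, Prod.swap_prod_mk,
      Set.mem_insert_iff, Set.mem_singleton_iff]
    simp only [d01, d02, d03, d04, d05, d12, d13, d14, d15, d23, d24, d25, d34, d35, d45, Ne.symm d01, Ne.symm d02, Ne.symm d03, Ne.symm d04, Ne.symm d05, Ne.symm d12, Ne.symm d13, Ne.symm d14, Ne.symm d15, Ne.symm d23, Ne.symm d24, Ne.symm d25, Ne.symm d34, Ne.symm d35, Ne.symm d45, false_and, and_false, or_false, false_or, true_and, and_true]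
    try tauto
  have c0 : (w.toSubgraph.neighborSet v0).ncard = 2 := by rw [n0, Set.ncard_pair d15]
  have n1 : w.toSubgraph.neighborSet v1 = {v2, v0} := by
    ext z
    rw [Subgraph.mem_neighborSet, hadj]
    simp only [Sym2.eq, Sym2.rel_iff', Prod.mk.injEq, Prod.swap_prod_mk,
      Set.mem_insert_iff, Set.mem_singleton_iff]
    simp only [d01, d02, d03, d04, d05, d12, d13, d14, d15, d23, d24, d25, d34, d35, d45, Ne.symm d01, Ne.symm d02, Ne.symm d03, Ne.symm d04, Ne.symm d05, Ne.symm d12, Ne.symm d13, Ne.symm d14, Ne.symm d15, Ne.symm d23, Ne.symm d24, Ne.symm d25, Ne.symm d34, Ne.symm d35, Ne.symm d45, false_and, and_false, or_false, false_or, true_and, and_true]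
    try tauto
  have c1 : (w.toSubgraph.neighborSet v1).ncard = 2 := by rw [n1, Set.ncard_pair (Ne.symm d02)]
  have n2 : w.toSubgraph.neighborSet v2 = {v3, v1} := by
    ext z
    rw [Subgraph.mem_neighborSet, hadj]
    simp only [Sym2.eq, Sym2.rel_iff', Prod.mk.injEq, Prod.swap_prod_mk,
      Set.mem_insert_iff, Set.mem_singleton_iff]
    simp only [d01, d02, d03, d04, d05, d12, d13, d14, d15, d23, d24, d25, d34, d35, d45, Ne.symm d01, Ne.symm d02, Ne.symm d03, Ne.symm d04, Ne.symm d05, Ne.symm d12, Ne.symm d13, Ne.symm d14, Ne.symm d15, Ne.symm d23, Ne.symm d24, Ne.symm d25, Ne.symm d34, Ne.symm d35, Ne.symm d45, false_and, and_false, or_false, false_or, true_and, and_true]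
    try tauto
  have c2 : (w.toSubgraph.neighborSet v2).ncard = 2 := by rw [n2, Set.ncard_pair (Ne.symm d13)]
  have n3 : w.toSubgraph.neighborSet v3 = {v4, v2} := by
    ext z
    rw [Subgraph.mem_neighborSet, hadj]
    simp only [Sym2.eq, Sym2.rel_iff', Prod.mk.injEq, Prod.swap_prod_mk,
      Set.mem_insert_iff, Set.mem_singleton_iff]
    simp only [d01, d02, d03, d04, d05, d12, d13, d14, d15, d23, d24, d25, d34, d35, d45, Ne.symm d01, Ne.symm d02, Ne.symm d03, Ne.symm d04, Ne.symm d05, Ne.symm d12, Ne.symm d13, Ne.symm d14, Ne.symm d15, Ne.symm d23, Ne.symm d24, Ne.symm d25, Ne.symm d34, Ne.symm d35, Ne.symm d45, false_and, and_false, or_false, false_or, true_and, and_true]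
    try tauto
  have c3 : (w.toSubgraph.neighborSet v3).ncard = 2 := by rw [n3, Set.ncard_pair (Ne.symm d24)]
  have n4 : w.toSubgraph.neighborSet v4 = {v5, v3} := by
    ext z
    rw [Subgraph.mem_neighborSet, hadj]
    simp only [Sym2.eq, Sym2.rel_iff', Prod.mk.injEq, Prod.swap_prod_mk,
      Set.mem_insert_iff, Set.mem_singleton_iff]
    simp only [d01, d02, d03, d04, d05, d12, d13, d14, d15, d23, d24, d25, d34, d35, d45, Ne.symm d01, Ne.symm d02, Ne.symm d03, Ne.symm d04, Ne.symm d05, Ne.symm d12, Ne.symm d13, Ne.symm d14, Ne.symm d15, Ne.symm d23, Ne.symm d24, Ne.symm d25, Ne.symm d34, Ne.symm d35, Ne.symm d45, false_and, and_false, or_false, false_or, true_and, and_true]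
    try tauto
  have c4 : (w.toSubgraph.neighborSet v4).ncard = 2 := by rw [n4, Set.ncard_pair (Ne.symm d35)]
  have n5 : w.toSubgraph.neighborSet v5 = {v0, v4} := by
    ext z
    rw [Subgraph.mem_neighborSet, hadj]
    simp only [Sym2.eq, Sym2.rel_iff', Prod.mk.injEq, Prod.swap_prod_mk,
      Set.mem_insert_iff, Set.mem_singleton_iff]
    simp only [d01, d02, d03, d04, d05, d12, d13, d14, d15, d23, d24, d25, d34, d35, d45, Ne.symm d01, Ne.symm d02, Ne.symm d03, Ne.symm d04, Ne.symm d05, Ne.symm d12, Ne.symm d13, Ne.symm d14, Ne.symm d15, Ne.symm d23, Ne.symm d24, Ne.symm d25, Ne.symm d34, Ne.symm d35, Ne.symm d45, false_and, and_false, or_false, false_or, true_and, and_true]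
    try tauto
  have c5 : (w.toSubgraph.neighborSet v5).ncard = 2 := by rw [n5, Set.ncard_pair d04]
  refine ⟨w.toSubgraph, ⟨w.toSubgraph_connected, ?_, ?_⟩, hverts, hadj⟩
  · rw [hverts]
    rw [      Set.ncard_insert_of_notMem (by simp [d01,d02,d03,d04,d05]) (Set.toFinite _),
      Set.ncard_insert_of_notMem (by simp [d12,d13,d14,d15]) (Set.toFinite _),
      Set.ncard_insert_of_notMem (by simp [d23,d24,d25]) (Set.toFinite _),
      Set.ncard_insert_of_notMem (by simp [d34,d35]) (Set.toFinite _),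
      Set.ncard_insert_of_notMem (by simp [d45]) (Set.toFinite _),
      Set.ncard_singleton]
  · intro p hp
    rw [hverts] at hp
    simp only [Set.mem_insert_iff, Set.mem_singleton_iff] at hp
    rcases hp with rfl|rfl|rfl|rfl|rfl|rfl <;> assumption

/-- Under the hypotheses of the main theorem (no 3-cycles, any two distinct cycles of
length 4, 5 or 6 share at most two edges, any two distinct 4-cycles share at most one
edge), there is no configuration consisting of a path `u,x,y,v` of length three, a path
`u,x,b,v` of length three with `b ≠ y`, and a path `u,a',b',v` of length three with
`a', b' ∉ {x, y}` (cases (a) and (b) of the proof cannot happen simultaneously). -/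
theorem no_simultaneous_paths {V : Type*} [Fintype V] (G : SimpleGraph V)
    (h3 : ∀ H : G.Subgraph, ¬ H.IsCycleSubgraph 3)
    (h456 : ∀ k₁ ∈ ({4, 5, 6} : Set ℕ), ∀ k₂ ∈ ({4, 5, 6} : Set ℕ),
      ∀ C₁ C₂ : G.Subgraph, C₁.IsCycleSubgraph k₁ → C₂.IsCycleSubgraph k₂ → C₁ ≠ C₂ →
        (C₁.edgeSet ∩ C₂.edgeSet).ncard ≤ 2)
    (h44 : ∀ C₁ C₂ : G.Subgraph, C₁.IsCycleSubgraph 4 → C₂.IsCycleSubgraph 4 → C₁ ≠ C₂ →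
        (C₁.edgeSet ∩ C₂.edgeSet).ncard ≤ 1) :
    ¬ ∃ u v x y b a' b' : V,
        (([u, x, y, v] : List V).Nodup ∧ G.Adj u x ∧ G.Adj x y ∧ G.Adj y v) ∧
        (([u, x, b, v] : List V).Nodup ∧ G.Adj u x ∧ G.Adj x b ∧ G.Adj b v ∧ b ≠ y) ∧
        (([u, a', b', v] : List V).Nodup ∧ G.Adj u a' ∧ G.Adj a' b' ∧ G.Adj b' v ∧
          a' ∉ ({x, y} : Set V) ∧ b' ∉ ({x, y} : Set V)) := by
  rintro ⟨u, v, x, y, b, a', b', ⟨nd1, hux, hxy, hyv⟩, ⟨nd2, -, hxb, hbv, hby⟩,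
    ⟨nd3, hua, hab, hbv', hax, hbx⟩⟩
  simp only [List.nodup_cons, List.mem_cons, List.not_mem_nil, or_false, List.nodup_nil,
    and_true, not_or] at nd1 nd2 nd3
  obtain ⟨⟨dux, duy, duv⟩, ⟨dxy, dxv⟩, dyv, -⟩ := nd1
  obtain ⟨⟨-, dub, -⟩, ⟨dxb, -⟩, dbv, -⟩ := nd2
  obtain ⟨⟨dua, dub', -⟩, ⟨dab', dav⟩, db'v, -⟩ := nd3
  simp only [Set.mem_insert_iff, Set.mem_singleton_iff, not_or] at hax hbx
  obtain ⟨dax, day⟩ := hax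
  obtain ⟨dbx', dby'⟩ := hbx
  by_cases hba : b = a'
  · -- triangle u, x, a'
    subst hba
    obtain ⟨C, hC, -, -⟩ := exists_cycle3
      (v0 := u) (v1 := x) (v2 := b)
      (by simp [dux, dub, dxb]) hux hxb hua.symm
    exact h3 C hC
  by_cases hbb : b = b'
  · -- 4-cycle u,x,b',a' and 6-cycle u,x,y,v,b',a'
    subst hbb
    obtain ⟨C4, hC4, hv4, ha4⟩ := exists_cycle4
      (v0 := u) (v1 := x) (v2 := b) (v3 := a')
      (by simp [dux, dub, dua, dxb, Ne.symm dax, Ne.symm dab'])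
      hux hxb hab.symm hua.symm
    obtain ⟨C6, hC6, hv6, ha6⟩ := exists_cycle6
      (v0 := u) (v1 := x) (v2 := y) (v3 := v) (v4 := b) (v5 := a')
      (by simp [dux, duy, duv, dub, dua, dxy, dxv, dxb, Ne.symm dax, dyv,
        Ne.symm dby', Ne.symm day, Ne.symm dbv, Ne.symm dav, Ne.symm dab'])
      hux hxy hyv hbv.symm hab.symm hua.symm
    have hy6 : y ∈ C6.verts := by rw [hv6]; simp
    have hy4 : y ∉ C4.verts := by
      rw [hv4]
      simp only [Set.mem_insert_iff, Set.mem_singleton_iff, not_or]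
      exact ⟨fun h => duy h.symm, fun h => dxy h.symm, fun h => hby h.symm, fun h => day h.symm⟩
    have hne : C4 ≠ C6 := fun h => hy4 (by rw [h]; exact hy6)
    have hsub : ({s(u, x), s(a', u), s(b, a')} : Set (Sym2 V)) ⊆
        C4.edgeSet ∩ C6.edgeSet := by
      intro e he
      simp only [Set.mem_insert_iff, Set.mem_singleton_iff] at he
      rcases he with rfl | rfl | rfl
      · exact ⟨Subgraph.mem_edgeSet.2 ((ha4 _ _).2 (by tauto)),
          Subgraph.mem_edgeSet.2 ((ha6 _ _).2 (by tauto))⟩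
      · exact ⟨Subgraph.mem_edgeSet.2 ((ha4 _ _).2 (by tauto)),
          Subgraph.mem_edgeSet.2 ((ha6 _ _).2 (by tauto))⟩
      · exact ⟨Subgraph.mem_edgeSet.2 ((ha4 _ _).2 (by tauto)),
          Subgraph.mem_edgeSet.2 ((ha6 _ _).2 (by tauto))⟩
    have hne1 : s(u, x) ∉ ({s(a', u), s(b, a')} : Set (Sym2 V)) := by
      simp only [Set.mem_insert_iff, Set.mem_singleton_iff, Sym2.eq, Sym2.rel_iff',
        Prod.mk.injEq, Prod.swap_prod_mk, not_or]
      tauto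
    have hne2 : (s(a', u) : Sym2 V) ≠ s(b, a') := by
      simp only [ne_eq, Sym2.eq, Sym2.rel_iff', Prod.mk.injEq, Prod.swap_prod_mk, not_or]
      tauto
    have hcard : ({s(u, x), s(a', u), s(b, a')} : Set (Sym2 V)).ncard = 3 := by
      rw [Set.ncard_insert_of_notMem hne1 (Set.toFinite _), Set.ncard_pair hne2]
    have h3le : 3 ≤ (C4.edgeSet ∩ C6.edgeSet).ncard := by
      calc 3 = ({s(u, x), s(a', u), s(b, a')} : Set (Sym2 V)).ncard := hcard.symm
        _ ≤ _ := Set.ncard_le_ncard hsub (Set.toFinite _)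
    have := h456 4 (by simp) 6 (by simp) C4 C6 hC4 hC6 hne
    omega
  · -- two 6-cycles u,x,b,v,b',a' and u,x,y,v,b',a'
    obtain ⟨C6a, hC6a, hv6a, ha6a⟩ := exists_cycle6
      (v0 := u) (v1 := x) (v2 := b) (v3 := v) (v4 := b') (v5 := a')
      (by simp [dux, dub, duv, dub', dua, dxb, dxv, Ne.symm dbx', Ne.symm dax, dbv,
        hbb, hba, Ne.symm db'v, Ne.symm dav, Ne.symm dab'])
      hux hxb hbv hbv'.symm hab.symm hua.symm
    obtain ⟨C6b, hC6b, hv6b, ha6b⟩ := exists_cycle6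
      (v0 := u) (v1 := x) (v2 := y) (v3 := v) (v4 := b') (v5 := a')
      (by simp [dux, duy, duv, dub', dua, dxy, dxv, Ne.symm dbx', Ne.symm dax, dyv,
        Ne.symm dby', Ne.symm day, Ne.symm db'v, Ne.symm dav, Ne.symm dab'])
      hux hxy hyv hbv'.symm hab.symm hua.symm
    have hy6b : y ∈ C6b.verts := by rw [hv6b]; simp
    have hy6a : y ∉ C6a.verts := by
      rw [hv6a]
      simp only [Set.mem_insert_iff, Set.mem_singleton_iff, not_or]
      exact ⟨fun h => duy h.symm, fun h => dxy h.symm, fun h => hby h.symm,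
        fun h => dyv h, fun h => dby' h.symm, fun h => day h.symm⟩
    have hne : C6a ≠ C6b := fun h => hy6a (by rw [h]; exact hy6b)
    have hsub : ({s(u, x), s(a', u), s(b', a')} : Set (Sym2 V)) ⊆
        C6a.edgeSet ∩ C6b.edgeSet := by
      intro e he
      simp only [Set.mem_insert_iff, Set.mem_singleton_iff] at he
      rcases he with rfl | rfl | rfl
      · exact ⟨Subgraph.mem_edgeSet.2 ((ha6a _ _).2 (by tauto)),
          Subgraph.mem_edgeSet.2 ((ha6b _ _).2 (by tauto))⟩
      · exact ⟨Subgraph.mem_edgeSet.2 ((ha6a _ _).2 (by tauto)),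
          Subgraph.mem_edgeSet.2 ((ha6b _ _).2 (by tauto))⟩
      · exact ⟨Subgraph.mem_edgeSet.2 ((ha6a _ _).2 (by tauto)),
          Subgraph.mem_edgeSet.2 ((ha6b _ _).2 (by tauto))⟩
    have hne1 : s(u, x) ∉ ({s(a', u), s(b', a')} : Set (Sym2 V)) := by
      simp only [Set.mem_insert_iff, Set.mem_singleton_iff, Sym2.eq, Sym2.rel_iff',
        Prod.mk.injEq, Prod.swap_prod_mk, not_or]
      tauto
    have hne2 : (s(a', u) : Sym2 V) ≠ s(b', a') := by
      simp only [ne_eq, Sym2.eq, Sym2.rel_iff', Prod.mk.injEq, Prod.swap_prod_mk, not_or]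
      tauto
    have hcard : ({s(u, x), s(a', u), s(b', a')} : Set (Sym2 V)).ncard = 3 := by
      rw [Set.ncard_insert_of_notMem hne1 (Set.toFinite _), Set.ncard_pair hne2]
    have h3le : 3 ≤ (C6a.edgeSet ∩ C6b.edgeSet).ncard := by
      calc 3 = ({s(u, x), s(a', u), s(b', a')} : Set (Sym2 V)).ncard := hcard.symm
        _ ≤ _ := Set.ncard_le_ncard hsub (Set.toFinite _)
    have := h456 6 (by simp) 6 (by simp) C6a C6b hC6a hC6b hne
    omega
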